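/- Let V be a real finite-dimensional vector space endowed with a non-degenerate quadratic form 𝒥(v) = ⟨Jv,v⟩ which is neither positive nor negative definite. If a symmetric bilinear form F: V×V → ℝ satisfies F(v,v) ≥ 0 for all v in the zero cone C_0, then r_+ := inf_{v ∈ C_+} F(v,v)/⟨Jv,v⟩ ≥ sup_{u ∈ C_-} F(u,u)/⟨Ju,u⟩ =: r_-, and for every r ∈ [r_-, r_+] one has F(v,v) ≥ r⟨Jv,v⟩ for every vector v ∈ V. If moreover F(v,v) > 0 for all v ∈ C_0 \ {0}, then r_- < r_+ and F(v,v) > r⟨Jv,v⟩ for all nonzero v ∈ V and every r ∈ (r_-, r_+). -/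

import Mathlib

/-!
Common definitions formalizing the notions of Araujo–Salgado,
"Infinitesimal Lyapunov functions for singular flows".

Flows on a compact manifold are modelled either as flows generated by a `C¹`
vector field on a finite-dimensional real inner product space `E` (a chart /
trivialized tangent bundle picture, setting A, structure `VFFlow`), or as an
abstract continuous flow on a topological space together with a linear
multiplicative cocycle on a trivialized finite-dimensional vector bundle with
fibre `V` (setting B, structures `FlowB`, `CocycleB`).
-/

open scoped RealInnerProductSpace
open Filter Topology

noncomputable section

/-! ### Linear algebra: quadratic forms, cones, J-separated operators -/

section LinearAlg

variable {V : Type*} [NormedAddCommGroup V] [InnerProductSpace ℝ V]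

/-- The value `𝒥(v) = ⟪J v, v⟫` of the quadratic form associated to the operator `J`. -/
def Qop (J : V →L[ℝ] V) (v : V) : ℝ := ⟪J v, v⟫

/-- The positive cone `C₊ = {0} ∪ {v : 𝒥(v) > 0}`. -/
def posConeOp (J : V →L[ℝ] V) : Set V := {0} ∪ {v | 0 < Qop J v}

/-- The negative cone `C₋ = {0} ∪ {v : 𝒥(v) < 0}`. -/
def negConeOp (J : V →L[ℝ] V) : Set V := {0} ∪ {v | Qop J v < 0}

/-- The zero cone `C₀ = 𝒥⁻¹(0)`. -/
def zeroConeOp (J : V →L[ℝ] V) : Set V := {v | Qop J v = 0}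

/-- `J` is a symmetric (self-adjoint) operator. -/
def IsSymmetricOp (J : V →L[ℝ] V) : Prop := ∀ v w, ⟪J v, w⟫ = ⟪v, J w⟫

/-- The quadratic form of `J` has index `q`: there is a `q`-dimensional subspace of
`𝒥`-negative vectors, and any subspace of `𝒥`-negative vectors has dimension `≤ q`. -/
def HasIndex (J : V →L[ℝ] V) (q : ℕ) : Prop :=
  (∃ W : Submodule ℝ V, Module.finrank ℝ W = q ∧ ∀ v ∈ W, v ≠ 0 → Qop J v < 0) ∧
  ∀ W : Submodule ℝ V, (∀ v ∈ W, v ≠ 0 → Qop J v < 0) → Module.finrank ℝ W ≤ q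

/-- A linear operator is `𝒥`-separated if it maps the positive cone into itself. -/
def OpJSeparated (J L : V →L[ℝ] V) : Prop := L '' posConeOp J ⊆ posConeOp J

/-- Strict `𝒥`-separation: `L(C₊ ∪ C₀) ⊆ C₊`. -/
def OpStrictJSeparated (J L : V →L[ℝ] V) : Prop :=
  L '' (posConeOp J ∪ zeroConeOp J) ⊆ posConeOp J

/-- `L` is a `𝒥`-isometry. -/
def IsJIsometry (J L : V →L[ℝ] V) : Prop := ∀ v, Qop J (L v) = Qop J v

/-- `R` is the `𝒥`-pseudo-adjoint of `L`. -/
def IsJPseudoAdjointPair (J L R : V →L[ℝ] V) : Prop :=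
  ∀ v w, ⟪J (L v), w⟫ = ⟪J v, R w⟫

/-- `L` is `𝒥`-symmetric (equal to its own `𝒥`-pseudo-adjoint). -/
def IsJSymmetric (J L : V →L[ℝ] V) : Prop := IsJPseudoAdjointPair J L L

/-- `L` is `𝒥`-monotonous: `𝒥(L v) ≥ 𝒥(v)` for all `v`. -/
def OpJMonotone (J L : V →L[ℝ] V) : Prop := ∀ v, Qop J v ≤ Qop J (L v)

/-- `L` is strictly `𝒥`-monotonous. -/
def OpStrictJMonotone (J L : V →L[ℝ] V) : Prop := ∀ v, v ≠ 0 → Qop J v < Qop J (L v)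

/-- `r₊ = r₊¹(L)`, the smallest "positive" singular value of the `𝒥`-polar
decomposition of a `𝒥`-separated operator `L`, characterized variationally as
`inf_{v ∈ C₊} √(𝒥(Lv)/𝒥(v))`. -/
def rPlus (J L : V →L[ℝ] V) : ℝ :=
  Real.sqrt (sInf {c | ∃ v, 0 < Qop J v ∧ c = Qop J (L v) / Qop J v})

/-- `r₋ = r₋¹(L)`, the largest "negative" singular value of the `𝒥`-polar
decomposition of a `𝒥`-separated operator `L`, characterized variationally as
`sup_{u ∈ C₋} √(𝒥(Lu)/𝒥(u))`. -/
def rMinus (J L : V →L[ℝ] V) : ℝ :=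
  Real.sqrt (sSup {c | ∃ v, Qop J v < 0 ∧ c = Qop J (L v) / Qop J v})

/-- Diagonalization data for a `𝒥`-symmetric operator `R`: `R` is diagonalized
by a `𝒥`-isometry, i.e. it admits a `𝒥`-orthonormal eigenbasis consisting of `q`
`𝒥`-negative eigenvectors (eigenvalues `rm 0 = r₋¹ ≥ … ≥ rm (q-1) = r₋^q > 0`)
and `p` `𝒥`-positive eigenvectors (eigenvalues `0 < rp 0 = r₊¹ ≤ … ≤ rp (p-1) = r₊^p`),
with every `rm i ≤ rp j`. -/
structure JEigenData (J R : V →L[ℝ] V) (q p : ℕ) where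
  rm : Fin q → ℝ
  rp : Fin p → ℝ
  em : Fin q → V
  ep : Fin p → V
  rm_pos : ∀ i, 0 < rm i
  rm_anti : Antitone rm
  rp_mono : Monotone rp
  rm_le_rp : ∀ i j, rm i ≤ rp j
  em_neg : ∀ i, Qop J (em i) = -1
  ep_pos : ∀ j, Qop J (ep j) = 1
  orth : ∀ a b : Fin q ⊕ Fin p, a ≠ b → ⟪J (Sum.elim em ep a), Sum.elim em ep b⟫ = 0
  eig_m : ∀ i, R (em i) = rm i • em i
  eig_p : ∀ j, R (ep j) = rp j • ep j
  indep : LinearIndependent ℝ (Sum.elim em ep)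
  spans : Submodule.span ℝ (Set.range (Sum.elim em ep)) = ⊤

/-- Gram matrix of a family of vectors with respect to the (pseudo) inner product `𝒥`. -/
def gram (J : V →L[ℝ] V) {d : ℕ} (v : Fin d → V) : Matrix (Fin d) (Fin d) ℝ :=
  Matrix.of fun i j => ⟪J (v i), v j⟫

/-- The rate `α_d(L; W)` of expansion of `d`-dimensional volume of `L|_W`, for a
`d`-dimensional subspace `W` of the positive cone, where volumes on `W` and on
`L(W)` are induced by the inner product given by `𝒥`. -/
def volExp (J L : V →L[ℝ] V) (d : ℕ) (W : Submodule ℝ V) : ℝ :=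
  sSup {c | ∃ v : Fin d → V, (∀ i, v i ∈ W) ∧ (gram J v).det ≠ 0 ∧
    c = Real.sqrt ((gram J fun i => L (v i)).det / (gram J v).det)}

/-- `σ_d(L)`: the infimum of `α_d(L; W)` over all `d`-dimensional subspaces `W ⊆ C₊`. -/
def sigmaD (J L : V →L[ℝ] V) (d : ℕ) : ℝ :=
  sInf {c | ∃ W : Submodule ℝ V, Module.finrank ℝ W = d ∧ (W : Set V) ⊆ posConeOp J ∧
    c = volExp J L d W}

/-- Two fields of quadratic forms are compatible (equivalent) on `Λ` relative to the
subbundles `Fm`, `Fp`: each is bounded by a constant multiple of the other on the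
fibers of `Fm` and `Fp`. -/
def CompatibleFieldsOn {X : Type*} (J J0 : X → V →L[ℝ] V)
    (Fm Fp : X → Submodule ℝ V) (Λ : Set X) : Prop :=
  ∃ C : ℝ, 1 < C ∧ ∀ x ∈ Λ, ∀ v : V, v ∈ Fm x ∨ v ∈ Fp x →
    C⁻¹ * Qop (J0 x) v ≤ Qop (J x) v ∧ Qop (J x) v ≤ C * Qop (J0 x) v

/-- The square of the area of the parallelogram spanned by `u` and `v`. -/
def areaSq (u v : V) : ℝ := ‖u‖ ^ 2 * ‖v‖ ^ 2 - ⟪u, v⟫ ^ 2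

variable [FiniteDimensional ℝ V]

/-- Orthogonal projection onto a subspace, as an endomorphism. -/
def projOf (K : Submodule ℝ V) : V →L[ℝ] V := K.subtypeL.comp K.orthogonalProjectionOnto

/-- The symmetric operator `J̃ = J·D + D*·J`. -/
def tildeOp (J D : V →L[ℝ] V) : V →L[ℝ] V :=
  J.comp D + (ContinuousLinearMap.adjoint D).comp J

end LinearAlg

/-! ### Setting B: abstract flows and linear multiplicative cocycles -/

section SettingB

variable (M : Type*) [TopologicalSpace M]

/-- A continuous flow on a topological space. -/
structure FlowB : Type _ where
  φ : ℝ → M → M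
  cont : Continuous fun p : ℝ × M => φ p.1 p.2
  map_zero : ∀ x, φ 0 x = x
  map_add : ∀ s t x, φ (s + t) x = φ s (φ t x)

variable {M}

namespace FlowB

/-- A trapping region for a flow. -/
def IsTrapping (ψ : FlowB M) (U : Set M) : Prop :=
  IsOpen U ∧ (∀ t > (0 : ℝ), ψ.φ t '' U ⊆ U) ∧
    ∃ T > (0 : ℝ), ∀ t > T, closure (ψ.φ t '' U) ⊆ interior U

/-- The maximal invariant (attracting) set `Λ = ⋂_{t>0} closure (φₜ U)` of `U`. -/
def maximalInv (ψ : FlowB M) (U : Set M) : Set M :=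
  ⋂ t ∈ Set.Ioi (0 : ℝ), closure (ψ.φ t '' U)

/-- An invariant set for the flow. -/
def IsInvariant (ψ : FlowB M) (Λ : Set M) : Prop := ∀ t : ℝ, ψ.φ t '' Λ = Λ

end FlowB

/-- A (smooth) linear multiplicative cocycle over the flow `ψ` on the trivialized
vector bundle with fibre `V`, together with its infinitesimal generator. -/
structure CocycleB (ψ : FlowB M) (V : Type*) [NormedAddCommGroup V]
    [InnerProductSpace ℝ V] : Type _ where
  A : ℝ → M → V →L[ℝ] V
  map_zero : ∀ x, A 0 x = ContinuousLinearMap.id ℝ V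
  cocycle : ∀ s t x, A (s + t) x = (A s (ψ.φ t x)).comp (A t x)
  gen : M → V →L[ℝ] V
  gen_spec : ∀ (x : M) (v : V) (t : ℝ),
    HasDerivAt (fun s => A s x v) (gen (ψ.φ t x) (A t x v)) t

variable {V : Type*} [NormedAddCommGroup V] [InnerProductSpace ℝ V]

/-- The cocycle is `𝒥`-separated on `U`: `A_t(x) C₊(x) ⊆ C₊(φₜ x)` for `t > 0`. -/
def CocycleJSeparated {ψ : FlowB M} (A : CocycleB ψ V) (J : M → V →L[ℝ] V)
    (U : Set M) : Prop :=
  ∀ x ∈ U, ∀ t > (0 : ℝ), A.A t x '' posConeOp (J x) ⊆ posConeOp (J (ψ.φ t x))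

/-- The cocycle is strictly `𝒥`-separated on `U`: `A_t(x) (C₊(x) ∪ C₀(x)) ⊆ C₊(φₜ x)`. -/
def CocycleStrictJSeparated {ψ : FlowB M} (A : CocycleB ψ V) (J : M → V →L[ℝ] V)
    (U : Set M) : Prop :=
  ∀ x ∈ U, ∀ t > (0 : ℝ),
    A.A t x '' (posConeOp (J x) ∪ zeroConeOp (J x)) ⊆ posConeOp (J (ψ.φ t x))

/-- The subbundle `F` is uniformly contracted by the cocycle over `Λ`. -/
def CocContracted {ψ : FlowB M} (A : CocycleB ψ V) (Λ : Set M)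
    (F : M → Submodule ℝ V) : Prop :=
  ∃ K > (0 : ℝ), ∃ l > (0 : ℝ), ∀ x ∈ Λ, ∀ t ≥ (0 : ℝ), ∀ u ∈ F x,
    ‖A.A t x u‖ ≤ K * Real.exp (-l * t) * ‖u‖

/-- The subbundle `F` is uniformly expanded by the cocycle over `Λ`. -/
def CocExpanded {ψ : FlowB M} (A : CocycleB ψ V) (Λ : Set M)
    (F : M → Submodule ℝ V) : Prop :=
  ∃ K > (0 : ℝ), ∃ l > (0 : ℝ), ∀ x ∈ Λ, ∀ t ≥ (0 : ℝ), ∀ u ∈ F x,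
    ‖A.A (-t) x u‖ ≤ K * Real.exp (-l * t) * ‖u‖

/-- A continuous field of non-degenerate quadratic forms of constant index `q` on `U`,
`C¹` along the flow. -/
structure QFFieldB (ψ : FlowB M) (V : Type*) [NormedAddCommGroup V]
    [InnerProductSpace ℝ V] (U : Set M) (q : ℕ) : Type _ where
  J : M → V →L[ℝ] V
  symm : ∀ x ∈ U, IsSymmetricOp (J x)
  nondeg : ∀ x ∈ U, Function.Bijective (J x)
  idx : ∀ x ∈ U, HasIndex (J x) q
  cont : ContinuousOn J U
  flow_diff : ∀ x ∈ U, ∀ v : V, ContDiff ℝ 1 fun t : ℝ => Qop (J (ψ.φ t x)) v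

variable [FiniteDimensional ℝ V]

/-- A continuous invariant splitting `E_Λ = F₋ ⊕ F₊` for the cocycle over `Λ`. -/
def CocInvSplitting {ψ : FlowB M} (A : CocycleB ψ V) (Λ : Set M)
    (Fm Fp : M → Submodule ℝ V) : Prop :=
  (∀ x ∈ Λ, IsCompl (Fm x) (Fp x)) ∧
  (∀ x ∈ Λ, Fm x ≠ ⊥) ∧ (∀ x ∈ Λ, Fp x ≠ ⊥) ∧
  (∀ x ∈ Λ, ∀ t : ℝ, (Fm x).map (A.A t x : V →ₗ[ℝ] V) = Fm (ψ.φ t x)) ∧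
  (∀ x ∈ Λ, ∀ t : ℝ, (Fp x).map (A.A t x : V →ₗ[ℝ] V) = Fp (ψ.φ t x)) ∧
  ContinuousOn (fun x => projOf (Fm x)) Λ ∧ ContinuousOn (fun x => projOf (Fp x)) Λ

/-- The splitting `F₋ ⊕ F₊` is dominated for the cocycle over `Λ`. -/
def CocDominated {ψ : FlowB M} (A : CocycleB ψ V) (Λ : Set M)
    (Fm Fp : M → Submodule ℝ V) : Prop :=
  ∃ K > (0 : ℝ), ∃ l > (0 : ℝ), ∀ x ∈ Λ, ∀ t > (0 : ℝ), ∀ u ∈ Fm x, ∀ w ∈ Fp (ψ.φ t x),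
    ‖A.A t x u‖ * ‖A.A (-t) (ψ.φ t x) w‖ ≤ K * Real.exp (-l * t) * (‖u‖ * ‖w‖)

/-- A hyperbolic splitting `Es ⊕ E^X ⊕ Eu` (with `E^X` the flow direction spanned by the
section `X`) for the cocycle over `Λ`: the definition of an Anosov flow when `Λ = M` and
the cocycle is the derivative cocycle. -/
def CocHypWithFlow {ψ : FlowB M} (A : CocycleB ψ V) (X : M → V) (Λ : Set M) : Prop :=
  ∃ Es Eu : M → Submodule ℝ V,
    (∀ x ∈ Λ, Es x ⊓ ((ℝ ∙ X x) ⊔ Eu x) = ⊥) ∧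
    (∀ x ∈ Λ, (ℝ ∙ X x) ⊓ (Es x ⊔ Eu x) = ⊥) ∧
    (∀ x ∈ Λ, Eu x ⊓ (Es x ⊔ (ℝ ∙ X x)) = ⊥) ∧
    (∀ x ∈ Λ, Es x ⊔ ((ℝ ∙ X x) ⊔ Eu x) = ⊤) ∧
    (∀ x ∈ Λ, Es x ≠ ⊥) ∧ (∀ x ∈ Λ, Eu x ≠ ⊥) ∧
    (∀ x ∈ Λ, ∀ t : ℝ, (Es x).map (A.A t x : V →ₗ[ℝ] V) = Es (ψ.φ t x)) ∧
    (∀ x ∈ Λ, ∀ t : ℝ, (Eu x).map (A.A t x : V →ₗ[ℝ] V) = Eu (ψ.φ t x)) ∧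
    ContinuousOn (fun x => projOf (Es x)) Λ ∧ ContinuousOn (fun x => projOf (Eu x)) Λ ∧
    CocContracted A Λ Es ∧ CocExpanded A Λ Eu

end SettingB

/-! ### Setting A: flows generated by a `C¹` vector field on a finite-dimensional
real inner product space (a chart picture of a compact manifold) -/

section SettingA

variable (E : Type*) [NormedAddCommGroup E] [InnerProductSpace ℝ E]

/-- A `C¹` vector field `X` together with its flow `φ`, its spatial derivative `DX`
and the derivative cocycle `Dφ` of the flow. -/
structure VFFlow : Type _ where
  X : E → E
  DX : E → E →L[ℝ] E
  φ : ℝ → E → E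
  Dφ : ℝ → E → E →L[ℝ] E
  contX : ContDiff ℝ 1 X
  DX_spec : ∀ x, HasFDerivAt X (DX x) x
  φ_cont : Continuous fun p : ℝ × E => φ p.1 p.2
  φ_zero : ∀ x, φ 0 x = x
  φ_add : ∀ s t x, φ (s + t) x = φ s (φ t x)
  φ_deriv : ∀ x t, HasDerivAt (fun s => φ s x) (X (φ t x)) t
  Dφ_spec : ∀ t x, HasFDerivAt (φ t) (Dφ t x) x

variable {E}

namespace VFFlow

variable (σ : VFFlow E)

/-- The underlying abstract flow. -/
def toFlowB : FlowB E := ⟨σ.φ, σ.φ_cont, σ.φ_zero, σ.φ_add⟩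

/-- The set of singularities (zeros) of the vector field. -/
def Sing : Set E := {x | σ.X x = 0}

/-- A trapping region: a bounded open set, positively invariant, whose forward images
eventually have closure inside its interior. -/
def IsTrappingRegion (U : Set E) : Prop :=
  IsOpen U ∧ Bornology.IsBounded U ∧ (∀ t > (0 : ℝ), σ.φ t '' U ⊆ U) ∧
    ∃ T > (0 : ℝ), ∀ t > T, closure (σ.φ t '' U) ⊆ interior U

/-- The attracting set `Λ(U) = ⋂_{t>0} closure (X_t(U))`. -/
def attracting (U : Set E) : Set E := ⋂ t ∈ Set.Ioi (0 : ℝ), closure (σ.φ t '' U)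

/-- An invariant set for the flow. -/
def IsInvariant (Λ : Set E) : Prop := ∀ t : ℝ, σ.φ t '' Λ = Λ

/-- A non-trivial compact invariant set: either it contains no singularities, or it
contains at most finitely many singularities, some regular orbit, and is connected. -/
def IsNonTrivial (Λ : Set E) : Prop :=
  Λ ∩ σ.Sing = ∅ ∨ ((Λ ∩ σ.Sing).Finite ∧ (∃ x ∈ Λ, σ.X x ≠ 0) ∧ IsConnected Λ)

/-- The non-wandering set `Ω(X)`. -/
def nonwandering : Set E :=
  {q | ∀ T > (0 : ℝ), ∀ W : Set E, IsOpen W → q ∈ W → ∃ t > T, (σ.φ t '' W ∩ W).Nonempty}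

/-- The subbundle `F` is uniformly contracted by the derivative cocycle over `Λ`. -/
def IsUnifContracted (Λ : Set E) (F : E → Submodule ℝ E) : Prop :=
  ∃ K > (0 : ℝ), ∃ l > (0 : ℝ), ∀ x ∈ Λ, ∀ t ≥ (0 : ℝ), ∀ u ∈ F x,
    ‖σ.Dφ t x u‖ ≤ K * Real.exp (-l * t) * ‖u‖

/-- The subbundle `F` is uniformly expanded by the derivative cocycle over `Λ`. -/
def IsUnifExpanded (Λ : Set E) (F : E → Submodule ℝ E) : Prop :=
  ∃ K > (0 : ℝ), ∃ l > (0 : ℝ), ∀ x ∈ Λ, ∀ t ≥ (0 : ℝ), ∀ u ∈ F x,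
    ‖σ.Dφ (-t) x u‖ ≤ K * Real.exp (-l * t) * ‖u‖

/-- Domination: `‖DX_t|_{Fm(x)}‖ ⬝ ‖DX_{-t}|_{Fp(X_t x)}‖ ≤ K e^{-λ t}`. -/
def IsDominated (Λ : Set E) (Fm Fp : E → Submodule ℝ E) : Prop :=
  ∃ K > (0 : ℝ), ∃ l > (0 : ℝ), ∀ x ∈ Λ, ∀ t > (0 : ℝ), ∀ u ∈ Fm x, ∀ w ∈ Fp (σ.φ t x),
    ‖σ.Dφ t x u‖ * ‖σ.Dφ (-t) (σ.φ t x) w‖ ≤ K * Real.exp (-l * t) * (‖u‖ * ‖w‖)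

/-- Sectional expansion: area along every 2-dimensional subspace of the fibers of `F`
is uniformly expanded, `|det(DX_t|_L)| ≥ C e^{λ t}`. -/
def IsSectionallyExpanded (Λ : Set E) (F : E → Submodule ℝ E) : Prop :=
  ∃ C > (0 : ℝ), ∃ l > (0 : ℝ), ∀ x ∈ Λ, ∀ L : Submodule ℝ E, L ≤ F x →
    Module.finrank ℝ L = 2 → ∀ t > (0 : ℝ), ∀ u ∈ L, ∀ v ∈ L,
      C * Real.exp (l * t) * Real.sqrt (areaSq u v) ≤
        Real.sqrt (areaSq (σ.Dφ t x u) (σ.Dφ t x v))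

end VFFlow

variable [FiniteDimensional ℝ E]

namespace VFFlow

variable (σ : VFFlow E)

/-- A continuous `DX_t`-invariant splitting `T_Λ M = Fm ⊕ Fp`. -/
def IsInvariantSplitting (Λ : Set E) (Fm Fp : E → Submodule ℝ E) : Prop :=
  (∀ x ∈ Λ, IsCompl (Fm x) (Fp x)) ∧
  (∀ x ∈ Λ, ∀ t : ℝ, (Fm x).map (σ.Dφ t x : E →ₗ[ℝ] E) = Fm (σ.φ t x)) ∧
  (∀ x ∈ Λ, ∀ t : ℝ, (Fp x).map (σ.Dφ t x : E →ₗ[ℝ] E) = Fp (σ.φ t x)) ∧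
  ContinuousOn (fun x => projOf (Fm x)) Λ ∧ ContinuousOn (fun x => projOf (Fp x)) Λ

/-- `Λ` is partially hyperbolic with stable (uniformly contracted) subbundle of
dimension `s`. -/
def IsPartiallyHyperbolicOfIndex (Λ : Set E) (s : ℕ) : Prop :=
  ∃ Fm Fp : E → Submodule ℝ E, σ.IsInvariantSplitting Λ Fm Fp ∧
    (∀ x ∈ Λ, Fm x ≠ ⊥) ∧ (∀ x ∈ Λ, Fp x ≠ ⊥) ∧
    σ.IsDominated Λ Fm Fp ∧ σ.IsUnifContracted Λ Fm ∧
    ∀ x ∈ Λ, Module.finrank ℝ (Fm x) = s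

/-- A hyperbolic singularity (dynamically: a hyperbolic fixed point of the flow). -/
def IsHyperbolicSing (x : E) : Prop :=
  σ.X x = 0 ∧ ∃ Es Eu : Submodule ℝ E, IsCompl Es Eu ∧
    (∀ t : ℝ, Es.map (σ.Dφ t x : E →ₗ[ℝ] E) = Es) ∧ (∀ t : ℝ, Eu.map (σ.Dφ t x : E →ₗ[ℝ] E) = Eu) ∧
    σ.IsUnifContracted {x} (fun _ => Es) ∧ σ.IsUnifExpanded {x} (fun _ => Eu)

/-- A sectionally hyperbolic singularity of index `i`. -/
def IsSecHypSing (x : E) (i : ℕ) : Prop :=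
  σ.X x = 0 ∧ ∃ Es Ec : Submodule ℝ E, IsCompl Es Ec ∧ Module.finrank ℝ Es = i ∧
    (∀ t : ℝ, Es.map (σ.Dφ t x : E →ₗ[ℝ] E) = Es) ∧ (∀ t : ℝ, Ec.map (σ.Dφ t x : E →ₗ[ℝ] E) = Ec) ∧
    σ.IsUnifContracted {x} (fun _ => Es) ∧ σ.IsSectionallyExpanded {x} (fun _ => Ec)

/-- A hyperbolic set of index `s`: continuous invariant splitting
`T_Λ M = Es ⊕ E^X ⊕ Eu` with `dim Es = s`, `Es` uniformly contracted and `Eu`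
uniformly expanded. -/
def IsHyperbolicOfIndex (Λ : Set E) (s : ℕ) : Prop :=
  ∃ Es Eu : E → Submodule ℝ E,
    (∀ x ∈ Λ, Module.finrank ℝ (Es x) = s) ∧
    (∀ x ∈ Λ, Es x ⊓ ((ℝ ∙ σ.X x) ⊔ Eu x) = ⊥) ∧
    (∀ x ∈ Λ, (ℝ ∙ σ.X x) ⊓ (Es x ⊔ Eu x) = ⊥) ∧
    (∀ x ∈ Λ, Eu x ⊓ (Es x ⊔ (ℝ ∙ σ.X x)) = ⊥) ∧
    (∀ x ∈ Λ, Es x ⊔ ((ℝ ∙ σ.X x) ⊔ Eu x) = ⊤) ∧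
    (∀ x ∈ Λ, ∀ t : ℝ, (Es x).map (σ.Dφ t x : E →ₗ[ℝ] E) = Es (σ.φ t x)) ∧
    (∀ x ∈ Λ, ∀ t : ℝ, (Eu x).map (σ.Dφ t x : E →ₗ[ℝ] E) = Eu (σ.φ t x)) ∧
    ContinuousOn (fun x => projOf (Es x)) Λ ∧ ContinuousOn (fun x => projOf (Eu x)) Λ ∧
    σ.IsUnifContracted Λ Es ∧ σ.IsUnifExpanded Λ Eu

/-- A sectional hyperbolic set of index `s`: a partially hyperbolic set whose
singularities are hyperbolic and whose central subbundle is sectionally expanding. -/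
def IsSectionalHyperbolicOfIndex (Λ : Set E) (s : ℕ) : Prop :=
  ∃ Fm Fp : E → Submodule ℝ E, σ.IsInvariantSplitting Λ Fm Fp ∧
    σ.IsDominated Λ Fm Fp ∧ σ.IsUnifContracted Λ Fm ∧
    (∀ x ∈ Λ, Module.finrank ℝ (Fm x) = s) ∧
    (∀ x ∈ Λ, 2 ≤ Module.finrank ℝ (Fp x)) ∧
    (∀ x ∈ Λ, σ.X x = 0 → σ.IsHyperbolicSing x) ∧
    σ.IsSectionallyExpanded Λ Fp

end VFFlow

/-- A `C¹` field of non-degenerate quadratic forms of constant index `q` on `U`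
(continuous on `U` and continuously differentiable along the flow). -/
structure QFField (σ : VFFlow E) (U : Set E) (q : ℕ) : Type _ where
  J : E → E →L[ℝ] E
  symm : ∀ x ∈ U, IsSymmetricOp (J x)
  nondeg : ∀ x ∈ U, Function.Bijective (J x)
  idx : ∀ x ∈ U, HasIndex (J x) q
  cont : ContinuousOn J U
  flow_diff : ∀ x ∈ U, ∀ v : E, ContDiff ℝ 1 fun t : ℝ => Qop (J (σ.φ t x)) v

/-- The vector field is `𝒥`-non-negative on `U`. -/
def JNonNegOn (σ : VFFlow E) (J : E → E →L[ℝ] E) (U : Set E) : Prop :=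
  ∀ x ∈ U, 0 ≤ Qop (J x) (σ.X x)

/-- The vector field is `𝒥`-non-positive on `U`. -/
def JNonPosOn (σ : VFFlow E) (J : E → E →L[ℝ] E) (U : Set E) : Prop :=
  ∀ x ∈ U, Qop (J x) (σ.X x) ≤ 0

/-- The flow is `𝒥`-separated on `U`. -/
def FlowJSeparated (σ : VFFlow E) (J : E → E →L[ℝ] E) (U : Set E) : Prop :=
  ∀ x ∈ U, ∀ t > (0 : ℝ), σ.Dφ t x '' posConeOp (J x) ⊆ posConeOp (J (σ.φ t x))

/-- The flow is strictly `𝒥`-separated on `U`. -/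
def FlowStrictJSeparated (σ : VFFlow E) (J : E → E →L[ℝ] E) (U : Set E) : Prop :=
  ∀ x ∈ U, ∀ t > (0 : ℝ),
    σ.Dφ t x '' (posConeOp (J x) ∪ zeroConeOp (J x)) ⊆ posConeOp (J (σ.φ t x))

/-- The operator `J̃ₓ = J(x)·DX(x) + DX(x)*·J(x)`. -/
def tildeJ (σ : VFFlow E) (J : E → E →L[ℝ] E) (x : E) : E →L[ℝ] E :=
  tildeOp (J x) (σ.DX x)

/-- Compatibility (equivalence) of two fields of forms over `Λ` relative to some
`DX_t`-invariant splitting. -/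
def Compatible (σ : VFFlow E) (J J0 : E → E →L[ℝ] E) (Λ : Set E) : Prop :=
  ∃ Fm Fp : E → Submodule ℝ E, σ.IsInvariantSplitting Λ Fm Fp ∧
    CompatibleFieldsOn J J0 Fm Fp Λ

/-- The `𝒥`-pseudo-orthogonal complement `N_x` of the flow direction `span {X(x)}`. -/
def NcompJ (σ : VFFlow E) (J : E → E →L[ℝ] E) (x : E) : Submodule ℝ E :=
  LinearMap.ker (innerSL ℝ (J x (σ.X x)) : E →ₗ[ℝ] ℝ)

/-- The projection `Π_x` onto `N_x` parallel to `X(x)` (at regular points where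
`𝒥(X(x)) ≠ 0`). -/
def PiJ (σ : VFFlow E) (J : E → E →L[ℝ] E) (x : E) : E →L[ℝ] E :=
  ContinuousLinearMap.id ℝ E -
    ((Qop (J x) (σ.X x))⁻¹ • innerSL ℝ (J x (σ.X x))).smulRight (σ.X x)

/-- The linear Poincaré flow `P^t v = Π_{X_t(x)} DX_t v`. -/
def LPF (σ : VFFlow E) (J : E → E →L[ℝ] E) (t : ℝ) (x : E) : E →L[ℝ] E :=
  (PiJ σ J (σ.φ t x)).comp (σ.Dφ t x)

/-- The operator `Ĵₓ = DX(x)*·Πₓ*JΠₓ + Πₓ*JΠₓ·DX(x)`. -/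
def hatJ (σ : VFFlow E) (J : E → E →L[ℝ] E) (x : E) : E →L[ℝ] E :=
  (ContinuousLinearMap.adjoint (σ.DX x)).comp
      ((ContinuousLinearMap.adjoint (PiJ σ J x)).comp ((J x).comp (PiJ σ J x))) +
    ((ContinuousLinearMap.adjoint (PiJ σ J x)).comp ((J x).comp (PiJ σ J x))).comp (σ.DX x)

/-- The linear Poincaré flow (w.r.t. the field `J`) is `𝒥₀`-monotonous on `Γ`:
`∂ₜ 𝒥₀(Pᵗ v)|_{t=0} ≥ 0` for nonzero `v ∈ N_x`, `x ∈ Γ`. -/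
def LPFMonotone (σ : VFFlow E) (J J0 : E → E →L[ℝ] E) (Γ : Set E) : Prop :=
  ∀ x ∈ Γ, ∀ v ∈ NcompJ σ J x, v ≠ 0 → ∃ d : ℝ, 0 ≤ d ∧
    HasDerivAt (fun t => Qop (J0 (σ.φ t x)) (LPF σ J t x v)) d 0

/-- The linear Poincaré flow (w.r.t. the field `J`) is strictly `𝒥₀`-monotonous on `Γ`:
`∂ₜ 𝒥₀(Pᵗ v)|_{t=0} > 0` for nonzero `v ∈ N_x`, `x ∈ Γ`. -/
def LPFStrictMonotone (σ : VFFlow E) (J J0 : E → E →L[ℝ] E) (Γ : Set E) : Prop :=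
  ∀ x ∈ Γ, ∀ v ∈ NcompJ σ J x, v ≠ 0 → ∃ d : ℝ, 0 < d ∧
    HasDerivAt (fun t => Qop (J0 (σ.φ t x)) (LPF σ J t x v)) d 0

/-- The orthogonal complement `N_x` of the flow direction (Riemannian version). -/
def Nperp (σ : VFFlow E) (x : E) : Submodule ℝ E := (ℝ ∙ σ.X x)ᗮ

/-- The linear Poincaré flow defined with the orthogonal projection onto `N`. -/
def LPFperp (σ : VFFlow E) (t : ℝ) (x : E) : E →L[ℝ] E :=
  (projOf (Nperp σ (σ.φ t x))).comp (σ.Dφ t x)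

/-- `Γ` is a hyperbolic set of index `s` for the "linear Poincaré flow" `P` acting on
the normal bundle `N`: a continuous `P`-invariant splitting `N = Ns ⊕ Nu` with
`dim Ns = s`, `Ns` uniformly contracted and `Nu` uniformly expanded. -/
def LPFHyperbolicOfIndex (σ : VFFlow E) (P : ℝ → E → E →L[ℝ] E)
    (N : E → Submodule ℝ E) (Γ : Set E) (s : ℕ) : Prop :=
  ∃ Ns Nu : E → Submodule ℝ E,
    (∀ x ∈ Γ, Ns x ⊔ Nu x = N x ∧ Ns x ⊓ Nu x = ⊥) ∧
    (∀ x ∈ Γ, Module.finrank ℝ (Ns x) = s) ∧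
    (∀ x ∈ Γ, ∀ t : ℝ, (Ns x).map (P t x : E →ₗ[ℝ] E) = Ns (σ.φ t x)) ∧
    (∀ x ∈ Γ, ∀ t : ℝ, (Nu x).map (P t x : E →ₗ[ℝ] E) = Nu (σ.φ t x)) ∧
    ContinuousOn (fun x => projOf (Ns x)) Γ ∧ ContinuousOn (fun x => projOf (Nu x)) Γ ∧
    ∃ K > (0 : ℝ), ∃ l > (0 : ℝ),
      (∀ x ∈ Γ, ∀ t ≥ (0 : ℝ), ∀ v ∈ Ns x, ‖P t x v‖ ≤ K * Real.exp (-l * t) * ‖v‖) ∧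
      (∀ x ∈ Γ, ∀ t ≥ (0 : ℝ), ∀ v ∈ Nu x, ‖P (-t) x v‖ ≤ K * Real.exp (-l * t) * ‖v‖)

end SettingA

/-- `r₊ = inf_{v ∈ C₊} F(v,v)/⟪Jv,v⟫`. -/
def rInfPlus {V : Type*} [NormedAddCommGroup V] [InnerProductSpace ℝ V]
    (J : V →L[ℝ] V) (F : LinearMap.BilinForm ℝ V) : ℝ :=
  sInf {r | ∃ v, 0 < Qop J v ∧ r = F v v / Qop J v}

/-- `r₋ = sup_{u ∈ C₋} F(u,u)/⟪Ju,u⟫`. -/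
def rSupMinus {V : Type*} [NormedAddCommGroup V] [InnerProductSpace ℝ V]
    (J : V →L[ℝ] V) (F : LinearMap.BilinForm ℝ V) : ℝ :=
  sSup {r | ∃ u, Qop J u < 0 ∧ r = F u u / Qop J u}

/-!
If `𝒥(v) > 0 > 𝒥(u)`, the line `s ↦ v + s • u` meets the zero cone at some `s > 0` and at some
`s < 0`. Along this line `𝒥` and `F` are quadratic polynomials in `s`; combining the inequalities
`F ≥ 0` at the two isotropic points so that the cross terms cancel gives
`F(u,u)/𝒥(u) ≤ F(v,v)/𝒥(v)`, which yields `r₋ ≤ r₊` and, sign by sign, `F(v,v) ≥ r 𝒥(v)`.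
If `F > 0` on `C₀ \ {0}`, compactness of the unit sphere gives `F(w,w) ≥ δ‖w‖²` on `C₀`;
the same argument applied to `F - δ⟪·,·⟫`, together with `|𝒥(w)| ≤ ‖J‖‖w‖²`, separates the
two families of ratios by `2δ/‖J‖`.
-/

theorem csSup_add_le_csInf {s t : Set ℝ} {ε : ℝ} (hs : s.Nonempty) (ht : t.Nonempty)
    (h : ∀ a ∈ s, ∀ b ∈ t, a + ε ≤ b) : sSup s + ε ≤ sInf t :=
  le_csInf ht fun b hb =>
    le_sub_iff_add_le.1 (csSup_le hs fun a ha => le_sub_iff_add_le.2 (h a ha b hb))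

section QopRatios

variable {V : Type*} [NormedAddCommGroup V] [InnerProductSpace ℝ V] {J : V →L[ℝ] V}
  {F : LinearMap.BilinForm ℝ V}

variable (F) in
theorem bilinForm_add_smul_self (hF : ∀ v w, F v w = F w v) (v u : V) (s : ℝ) :
    F (v + s • u) (v + s • u) = F v v + 2 * s * F v u + s ^ 2 * F u u := by
  simp only [map_add, LinearMap.add_apply, map_smul, LinearMap.smul_apply, smul_eq_mul, hF u v]
  ring

theorem qop_add_smul (hJ : IsSymmetricOp J) (v u : V) (s : ℝ) :
    Qop J (v + s • u) = Qop J v + 2 * s * ⟪J v, u⟫ + s ^ 2 * Qop J u := by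
  have hcross : ⟪J u, v⟫ = ⟪J v, u⟫ := by rw [hJ, real_inner_comm]
  simp only [Qop, map_add, map_smul, inner_add_left, inner_add_right, real_inner_smul_left,
    real_inner_smul_right, hcross]
  ring

variable (J) in
theorem qop_smul (c : ℝ) (v : V) : Qop J (c • v) = c ^ 2 * Qop J v := by
  simp only [Qop, map_smul, real_inner_smul_left, real_inner_smul_right]
  ring

variable (J) in
theorem abs_qop_le (v : V) : |Qop J v| ≤ ‖J‖ * ‖v‖ ^ 2 :=
  calc |Qop J v| ≤ ‖J v‖ * ‖v‖ := abs_real_inner_le_norm (J v) v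
    _ ≤ ‖J‖ * ‖v‖ * ‖v‖ := by gcongr; exact J.le_opNorm v
    _ = ‖J‖ * ‖v‖ ^ 2 := by ring

theorem exists_pos_qop_add_smul_eq_zero (hJ : IsSymmetricOp J) {v u : V}
    (hv : 0 < Qop J v) (hu : Qop J u < 0) : ∃ s > (0 : ℝ), Qop J (v + s • u) = 0 := by
  set b := ⟪J v, u⟫
  set D := b ^ 2 - Qop J u * Qop J v
  have hD : b ^ 2 < D := by simp only [D]; nlinarith
  have hbD : |b| < √D := by rwa [Real.lt_sqrt (abs_nonneg b), sq_abs]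
  refine ⟨(b + √D) / -Qop J u, div_pos (by linarith [neg_abs_le b]) (neg_pos.2 hu), ?_⟩
  have hu0 : Qop J u ≠ 0 := hu.ne
  rw [qop_add_smul hJ]
  field_simp
  linear_combination Real.sq_sqrt ((sq_nonneg b).trans hD.le)

theorem div_qop_le_div_qop (hJ : IsSymmetricOp J) (hF : ∀ v w, F v w = F w v)
    (hF0 : ∀ w, Qop J w = 0 → 0 ≤ F w w) {u v : V} (hu : Qop J u < 0) (hv : 0 < Qop J v) :
    F u u / Qop J u ≤ F v v / Qop J v := by
  obtain ⟨s, hs, hJs⟩ := exists_pos_qop_add_smul_eq_zero hJ hv hu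
  obtain ⟨t, ht, hJt⟩ :=
    exists_pos_qop_add_smul_eq_zero hJ hv (u := -u) (by simpa [Qop] using hu)
  rw [smul_neg, ← neg_smul] at hJt
  have hFs := hF0 _ hJs
  have hFt := hF0 _ hJt
  rw [qop_add_smul hJ] at hJs hJt
  rw [bilinForm_add_smul_self F hF] at hFs hFt
  -- `t` times the relation at `s` plus `s` times the one at `-t` cancels the cross terms.
  have hc : Qop J v = -(s * t * Qop J u) :=
    mul_left_cancel₀ (add_pos hs ht).ne' (by linear_combination t * hJs + s * hJt)
  have hC : 0 ≤ F v v + s * t * F u u := by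
    refine nonneg_of_mul_nonneg_right ?_ (add_pos hs ht)
    linear_combination t * hFs + s * hFt
  calc F u u / Qop J u = -(s * t * F u u) / Qop J v := by
        rw [hc]; field_simp [hu.ne]
    _ ≤ F v v / Qop J v := by gcongr; linarith

variable (J) in
theorem exists_pos_mul_norm_sq_le_of_qop_eq_zero [FiniteDimensional ℝ V]
    (hF0 : ∀ w, Qop J w = 0 → w ≠ 0 → 0 < F w w) :
    ∃ δ > (0 : ℝ), ∀ w, Qop J w = 0 → δ * ‖w‖ ^ 2 ≤ F w w := by
  have hQc : Continuous (Qop J) := by unfold Qop; fun_prop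
  have : IsModuleTopology ℝ V := isModuleTopologyOfFiniteDimensional
  have hFc : Continuous fun w => F w w :=
    (IsModuleTopology.continuous_bilinear_of_finite_left F).comp
      (continuous_id.prodMk continuous_id)
  have hK : IsCompact (Metric.sphere (0 : V) 1 ∩ {w | Qop J w = 0}) :=
    (isCompact_sphere 0 1).inter_right (isClosed_eq hQc continuous_const)
  obtain ⟨δ, hδ, hδK⟩ := hK.exists_forall_le' hFc.continuousOn
    fun w hw => hF0 w hw.2 (ne_zero_of_mem_unit_sphere ⟨w, hw.1⟩)
  refine ⟨δ, hδ, fun w hw => ?_⟩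
  rcases eq_or_ne w 0 with rfl | hw0
  · simp
  have hnorm : ‖w‖ ≠ 0 := norm_ne_zero_iff.2 hw0
  have := hδK (‖w‖⁻¹ • w) ⟨by simp [norm_smul, hnorm], by simp [qop_smul, hw]⟩
  simp only [map_smul, LinearMap.smul_apply, smul_eq_mul] at this
  field_simp at this
  linarith

theorem norm_pos_of_qop_pos {v : V} (hv : 0 < Qop J v) : 0 < ‖J‖ :=
  norm_pos_iff.2 fun hJ => by simp [Qop, hJ] at hv

theorem div_qop_add_le_div_qop (hJ : IsSymmetricOp J) (hF : ∀ v w, F v w = F w v) {δ : ℝ}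
    (hδ : 0 ≤ δ) (hδF : ∀ w, Qop J w = 0 → δ * ‖w‖ ^ 2 ≤ F w w) {u v : V} (hu : Qop J u < 0)
    (hv : 0 < Qop J v) : F u u / Qop J u + 2 * (δ / ‖J‖) ≤ F v v / Qop J v := by
  have hJpos := norm_pos_of_qop_pos hv
  have key := div_qop_le_div_qop hJ (F := F - δ • innerₗ V)
    (fun x y => by simp [hF x y, real_inner_comm])
    (fun w hw => by simpa [real_inner_self_eq_norm_sq] using hδF w hw) hu hv
  simp only [LinearMap.sub_apply, LinearMap.smul_apply, innerₗ_apply_apply, smul_eq_mul,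
    real_inner_self_eq_norm_sq, sub_div] at key
  have hu' : δ / ‖J‖ ≤ -(δ * ‖u‖ ^ 2 / Qop J u) := by
    rw [← div_neg, div_le_div_iff₀ hJpos (neg_pos.2 hu)]
    nlinarith [neg_abs_le (Qop J u), abs_qop_le J u]
  have hv' : δ / ‖J‖ ≤ δ * ‖v‖ ^ 2 / Qop J v := by
    rw [div_le_div_iff₀ hJpos hv]
    nlinarith [le_abs_self (Qop J v), abs_qop_le J v]
  linarith

theorem rSupMinus_add_le_rInfPlus {ε : ℝ} (hpos : ∃ v, 0 < Qop J v) (hneg : ∃ u, Qop J u < 0)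
    (h : ∀ u v, Qop J u < 0 → 0 < Qop J v → F u u / Qop J u + ε ≤ F v v / Qop J v) :
    rSupMinus J F + ε ≤ rInfPlus J F := by
  obtain ⟨v, hv⟩ := hpos
  obtain ⟨u, hu⟩ := hneg
  refine csSup_add_le_csInf ⟨_, u, hu, rfl⟩ ⟨_, v, hv, rfl⟩ ?_
  rintro _ ⟨u, hu, rfl⟩ _ ⟨v, hv, rfl⟩
  exact h u v hu hv

theorem div_qop_le_rSupMinus (hpos : ∃ v, 0 < Qop J v)
    (h : ∀ u v, Qop J u < 0 → 0 < Qop J v → F u u / Qop J u ≤ F v v / Qop J v) {u : V}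
    (hu : Qop J u < 0) : F u u / Qop J u ≤ rSupMinus J F := by
  obtain ⟨v, hv⟩ := hpos
  refine le_csSup ⟨F v v / Qop J v, ?_⟩ ⟨u, hu, rfl⟩
  rintro _ ⟨u, hu, rfl⟩
  exact h u v hu hv

theorem rInfPlus_le_div_qop (hneg : ∃ u, Qop J u < 0)
    (h : ∀ u v, Qop J u < 0 → 0 < Qop J v → F u u / Qop J u ≤ F v v / Qop J v) {v : V}
    (hv : 0 < Qop J v) : rInfPlus J F ≤ F v v / Qop J v := by
  obtain ⟨u, hu⟩ := hneg
  refine csInf_le ⟨F u u / Qop J u, ?_⟩ ⟨v, hv, rfl⟩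
  rintro _ ⟨v, hv, rfl⟩
  exact h u v hu hv

theorem mul_qop_le_of_le_of_le (hpos : ∃ v, 0 < Qop J v) (hneg : ∃ u, Qop J u < 0)
    (h : ∀ u v, Qop J u < 0 → 0 < Qop J v → F u u / Qop J u ≤ F v v / Qop J v)
    (hF0 : ∀ w, Qop J w = 0 → 0 ≤ F w w) {r : ℝ} (hlo : rSupMinus J F ≤ r)
    (hhi : r ≤ rInfPlus J F) (v : V) : r * Qop J v ≤ F v v := by
  rcases lt_trichotomy (Qop J v) 0 with hv | hv | hv
  · rw [← div_le_iff_of_neg hv]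
    exact (div_qop_le_rSupMinus hpos h hv).trans hlo
  · simpa [hv] using hF0 v hv
  · rw [← le_div_iff₀ hv]
    exact hhi.trans (rInfPlus_le_div_qop hneg h hv)

theorem mul_qop_lt_of_lt_of_lt (hpos : ∃ v, 0 < Qop J v) (hneg : ∃ u, Qop J u < 0)
    (h : ∀ u v, Qop J u < 0 → 0 < Qop J v → F u u / Qop J u ≤ F v v / Qop J v)
    (hF0 : ∀ w, Qop J w = 0 → w ≠ 0 → 0 < F w w) {r : ℝ} (hlo : rSupMinus J F < r)
    (hhi : r < rInfPlus J F) {v : V} (hv0 : v ≠ 0) : r * Qop J v < F v v := by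
  rcases lt_trichotomy (Qop J v) 0 with hv | hv | hv
  · rw [← div_lt_iff_of_neg hv]
    exact (div_qop_le_rSupMinus hpos h hv).trans_lt hlo
  · simpa [hv] using hF0 v hv hv0
  · rw [← lt_div_iff₀ hv]
    exact hhi.trans_le (rInfPlus_le_div_qop hneg h hv)

end QopRatios

theorem stmt6_general {V : Type*} [NormedAddCommGroup V] [InnerProductSpace ℝ V]
    [FiniteDimensional ℝ V]
    (J : V →L[ℝ] V) (hsymm : IsSymmetricOp J)
    (hpos : ∃ v, 0 < Qop J v) (hneg : ∃ u, Qop J u < 0)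
    (F : LinearMap.BilinForm ℝ V) (hFsymm : ∀ v w, F v w = F w v)
    (hF0 : ∀ v, Qop J v = 0 → 0 ≤ F v v) :
    rSupMinus J F ≤ rInfPlus J F ∧
    (∀ r : ℝ, rSupMinus J F ≤ r → r ≤ rInfPlus J F → ∀ v, r * Qop J v ≤ F v v) ∧
    ((∀ v, Qop J v = 0 → v ≠ 0 → 0 < F v v) →
      rSupMinus J F < rInfPlus J F ∧
      ∀ r : ℝ, rSupMinus J F < r → r < rInfPlus J F → ∀ v, v ≠ 0 →
        r * Qop J v < F v v) := by
  have hsep : ∀ u v, Qop J u < 0 → 0 < Qop J v → F u u / Qop J u ≤ F v v / Qop J v :=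
    fun u v hu hv => div_qop_le_div_qop hsymm hFsymm hF0 hu hv
  refine ⟨by simpa using rSupMinus_add_le_rInfPlus (ε := 0) hpos hneg (by simpa using hsep),
    fun r hlo hhi v => mul_qop_le_of_le_of_le hpos hneg hsep hF0 hlo hhi v, fun hF0' => ?_⟩
  obtain ⟨δ, hδ, hδF⟩ := exists_pos_mul_norm_sq_le_of_qop_eq_zero J hF0'
  have hgap := rSupMinus_add_le_rInfPlus hpos hneg
    fun u v hu hv => div_qop_add_le_div_qop hsymm hFsymm hδ.le hδF hu hv
  have hJ : 0 < ‖J‖ := hpos.elim fun _ => norm_pos_of_qop_pos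
  exact ⟨by linarith [show 0 < 2 * (δ / ‖J‖) by positivity],
    fun r hlo hhi v hv => mul_qop_lt_of_lt_of_lt hpos hneg hsep hF0' hlo hhi hv⟩

/-- Lemma 2.2, Lemma of Kühne/Wojtkowski. Let `V` be a real
finite-dimensional vector space with a non-degenerate indefinite quadratic form
`𝒥(v) = ⟪Jv,v⟫`. If a symmetric bilinear form `F` is non-negative on the zero cone
`C₀`, then `r₋ ≤ r₊` and `F(v,v) ≥ r ⟪Jv,v⟫` for every `r ∈ [r₋, r₊]` and every `v`.
If moreover `F` is positive on `C₀ \ {0}`, then `r₋ < r₊` and `F(v,v) > r ⟪Jv,v⟫`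
for all nonzero `v` and every `r ∈ (r₋, r₊)`. -/
theorem stmt6 {V : Type*} [NormedAddCommGroup V] [InnerProductSpace ℝ V]
    [FiniteDimensional ℝ V]
    (J : V →L[ℝ] V) (hsymm : IsSymmetricOp J) (hbij : Function.Bijective J)
    (hpos : ∃ v, 0 < Qop J v) (hneg : ∃ u, Qop J u < 0)
    (F : LinearMap.BilinForm ℝ V) (hFsymm : ∀ v w, F v w = F w v)
    (hF0 : ∀ v, Qop J v = 0 → 0 ≤ F v v) :
    rSupMinus J F ≤ rInfPlus J F ∧
    (∀ r : ℝ, rSupMinus J F ≤ r → r ≤ rInfPlus J F → ∀ v, r * Qop J v ≤ F v v) ∧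
    ((∀ v, Qop J v = 0 → v ≠ 0 → 0 < F v v) →
      rSupMinus J F < rInfPlus J F ∧
      ∀ r : ℝ, rSupMinus J F < r → r < rInfPlus J F → ∀ v, v ≠ 0 →
        r * Qop J v < F v v) :=
  stmt6_general J hsymm hpos hneg F hFsymm hF0
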